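/- arXiv:2511.17716 — 5 statements merged into one kernel-verified Lean document; each statement's English description precedes it below -/
import Mathlib

section
/- Let P be a prime with P ≡ 1 (mod 5), let γ be a positive integer with γ ≡ 4 (mod 5), and let c be a positive integer with 5·c − 1 = γ·P. Let u, v be positive integers such that u·v = c², u ≡ −c (mod γ), v ≡ −c (mod γ), u ≢ −c (mod P), and v ≢ −c (mod P). Then A = (u + c)/γ and B = (v + c)/γ are positive integers, and with C = c·P one has 5/P = 1/A + 1/B + 1/C, with P ∤ A and P ∤ B. -/
/-!
Since `u = γA - c` and `v = γB - c`, the kernel equation `u v = c²` expands to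
`γ (γ A B - c (A + B)) = 0`, i.e. `1/A + 1/B = γ/c`. Adding `1/(cP)` gives `(γP + 1)/(cP)`,
which is `5/P` because `5c = γP + 1`. Finally `P ∣ A` would force `P ∣ γA = u + c`.
-/

theorem Int.modEq_neg_iff_dvd_add {a b n : ℤ} : a ≡ -b [ZMOD n] ↔ n ∣ a + b := by
  rw [Int.modEq_iff_dvd, ← dvd_neg, neg_sub, sub_neg_eq_add]

theorem Nat.cast_modEq_neg_iff_dvd_add {a b n : ℕ} :
    (a : ℤ) ≡ -(b : ℤ) [ZMOD (n : ℤ)] ↔ n ∣ a + b := by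
  rw [Int.modEq_neg_iff_dvd_add, ← Int.natCast_add, Int.natCast_dvd_natCast]

namespace ED1

theorem mul_add_eq_of_kernel {γ A B u v c : ℕ} (hγ : 0 < γ) (hA : γ * A = u + c)
    (hB : γ * B = v + c) (huv : u * v = c ^ 2) : c * (A + B) = γ * A * B := by
  apply Nat.eq_of_mul_eq_mul_left hγ
  calc γ * (c * (A + B)) = c * (γ * A) + c * (γ * B) := by ring
    _ = u * v + c * u + c * v + c ^ 2 := by rw [hA, hB, huv]; ring
    _ = (γ * A) * (γ * B) := by rw [hA, hB]; ring
    _ = γ * (γ * A * B) := by ring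

theorem div_eq_one_div_add_one_div_add_one_div {K : Type*} [Field K] {n P γ c A B : K}
    (hP : P ≠ 0) (hc : c ≠ 0) (hA : A ≠ 0) (hB : B ≠ 0) (hkey : n * c = γ * P + 1)
    (hker : c * (A + B) = γ * A * B) : n / P = 1 / A + 1 / B + 1 / (c * P) := by
  field_simp
  linear_combination A * B * hkey - P * hker

end ED1

theorem stmt_6_general (P γ c u v : ℕ) (hc : 0 < c)
    (hkey : 5 * c - 1 = γ * P) (huv : u * v = c ^ 2)
    (hucγ : (u : ℤ) ≡ -(c : ℤ) [ZMOD (γ : ℤ)])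
    (hvcγ : (v : ℤ) ≡ -(c : ℤ) [ZMOD (γ : ℤ)])
    (hucP : ¬ ((u : ℤ) ≡ -(c : ℤ) [ZMOD (P : ℤ)]))
    (hvcP : ¬ ((v : ℤ) ≡ -(c : ℤ) [ZMOD (P : ℤ)])) :
    γ ∣ u + c ∧ γ ∣ v + c ∧
    0 < (u + c) / γ ∧ 0 < (v + c) / γ ∧
    (5 : ℚ) / (P : ℚ) =
      1 / (((u + c) / γ : ℕ) : ℚ) + 1 / (((v + c) / γ : ℕ) : ℚ) + 1 / ((c : ℚ) * (P : ℚ)) ∧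
    ¬ P ∣ (u + c) / γ ∧ ¬ P ∣ (v + c) / γ := by
  obtain ⟨hγ, hP⟩ : 0 < γ ∧ 0 < P := CanonicallyOrderedAdd.mul_pos.mp (by omega)
  have hdu := Nat.cast_modEq_neg_iff_dvd_add.mp hucγ
  have hdv := Nat.cast_modEq_neg_iff_dvd_add.mp hvcγ
  have hApos := Nat.div_pos (Nat.le_of_dvd (by omega) hdu) hγ
  have hBpos := Nat.div_pos (Nat.le_of_dvd (by omega) hdv) hγ
  refine ⟨hdu, hdv, hApos, hBpos, ?_,
    fun h => hucP (Nat.cast_modEq_neg_iff_dvd_add.mpr (h.trans (Nat.div_dvd_of_dvd hdu))),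
    fun h => hvcP (Nat.cast_modEq_neg_iff_dvd_add.mpr (h.trans (Nat.div_dvd_of_dvd hdv)))⟩
  have hker := ED1.mul_add_eq_of_kernel hγ (Nat.mul_div_cancel' hdu) (Nat.mul_div_cancel' hdv) huv
  refine ED1.div_eq_one_div_add_one_div_add_one_div (γ := (γ : ℚ)) (by positivity)
    (by positivity) (by positivity) (by positivity) ?_ (by exact_mod_cast hker)
  exact_mod_cast (by omega : 5 * c = γ * P + 1)

/-- ED1 parametrization (forward direction): from admissible parameters `(γ, c, u, v)`
one reconstructs an ED1 solution `A = (u+c)/γ`, `B = (v+c)/γ`, `C = c·P` of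
`5/P = 1/A + 1/B + 1/C` with `P ∤ A` and `P ∤ B`. -/
theorem stmt_6 (P γ c u v : ℕ) (hP : Nat.Prime P) (hP5 : P % 5 = 1)
    (hγpos : 0 < γ) (hγ5 : γ % 5 = 4) (hc : 0 < c) (hu : 0 < u) (hv : 0 < v)
    (hkey : 5 * c - 1 = γ * P) (huv : u * v = c ^ 2)
    (hucγ : (u : ℤ) ≡ -(c : ℤ) [ZMOD (γ : ℤ)])
    (hvcγ : (v : ℤ) ≡ -(c : ℤ) [ZMOD (γ : ℤ)])
    (hucP : ¬ ((u : ℤ) ≡ -(c : ℤ) [ZMOD (P : ℤ)]))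
    (hvcP : ¬ ((v : ℤ) ≡ -(c : ℤ) [ZMOD (P : ℤ)])) :
    γ ∣ u + c ∧ γ ∣ v + c ∧
    0 < (u + c) / γ ∧ 0 < (v + c) / γ ∧
    (5 : ℚ) / (P : ℚ) =
      1 / (((u + c) / γ : ℕ) : ℚ) + 1 / (((v + c) / γ : ℕ) : ℚ) + 1 / ((c : ℚ) * (P : ℚ)) ∧
    ¬ P ∣ (u + c) / γ ∧ ¬ P ∣ (v + c) / γ :=
  stmt_6_general P γ c u v hc hkey huv hucγ hvcγ hucP hvcP
end

section
/- Let P be a prime with P ≡ 1 (mod 5), and let A, B, c be positive integers with P ∤ A, P ∤ B, and 5/P = 1/A + 1/B + 1/(c·P) (as rational numbers). Then P divides 5·c − 1; and setting γ = (5·c − 1)/P, u = γ·A − c, v = γ·B − c, the numbers u and v are positive integers satisfying u·v = c², γ ≡ 4 (mod 5), u ≡ −c (mod γ), v ≡ −c (mod γ), u ≢ −c (mod P), and v ≢ −c (mod P). -/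
/-!
Clearing denominators gives `5ABc = cP(A + B) + AB`, so `P ∣ AB(5c - 1)` and hence `P ∣ 5c - 1`.
With `γ = (5c - 1)/P` the equation becomes `γAB = c(A + B)`, i.e. `(γA - c)(γB - c) = c²`, and
all claims except `u, v ≢ -c (mod P)`, that is `P ∤ γ`, follow at once. If `γ = Pt`, then
`t ≡ 4 (mod 5)`, `A + B = γH` and `AB = cH` (as `γ` is coprime to `c`), and `q = P`, `r = 5A - P`
is a positive solution of `t(q² + r²) + 2 = M(tqr - 1)` with `M = 5Ht - 2 ≥ 7`. Vieta jumping
`q ↦ Mr - q` shows that this equation has no positive solutions.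
-/

theorem vieta_no_pos_solution {t M : ℤ} (ht : 2 ≤ t) (hM : 7 ≤ M) {q r : ℤ} (hq : 0 < q)
    (hr : 0 < r) : t * (q ^ 2 + r ^ 2) + 2 ≠ M * (t * q * r - 1) := by
  suffices h : ∀ n : ℕ, ∀ q r : ℤ, 0 < q → 0 < r → q + r ≤ n →
      t * (q ^ 2 + r ^ 2) + 2 ≠ M * (t * q * r - 1) from
    h _ q r hq hr (Int.self_le_toNat _)
  intro n
  induction n with
  | zero => intro q r hq hr hn; push_cast at hn; omega
  | succ n ih =>
    intro q r hq hr hn h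
    wlog hrq : r ≤ q generalizing q r
    · exact this r q hr hq (by linarith) (by linear_combination h) (by linarith)
    have hq' : t * q * (M * r - q) = t * r ^ 2 + M + 2 := by linear_combination -h
    have hq'_pos : 0 < M * r - q := pos_of_mul_pos_right (by rw [hq']; positivity) (by positivity)
    rcases lt_or_ge (M * r - q) q with hlt | hge
    · exact ih (M * r - q) r hq'_pos hr (by push_cast at hn; linarith) (by linear_combination h)
    · -- both roots `q` and `Mr - q` are `≥ r`, which forces `M(tr² - 1) ≤ 2tr² + 2`
      have hroots : 0 ≤ t * ((q - r) * (M * r - q - r)) := by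
        apply mul_nonneg <;> [linarith; exact mul_nonneg (by linarith) (by linarith)]
      have htr : 2 ≤ t * r ^ 2 := by nlinarith
      nlinarith

theorem emod_five_eq_four_of_mul_eq {a P c : ℤ} (hP5 : P % 5 = 1) (h : a * P = 5 * c - 1) :
    a % 5 = 4 := by
  have h' : a * P % 5 = 4 := by rw [h]; omega
  rwa [Int.mul_emod, hP5, mul_one, Int.emod_emod] at h'

theorem mul_sub_modEq_neg (g a c : ℤ) : g * a - c ≡ -c [ZMOD g] :=
  Int.modEq_iff_dvd.mpr ⟨-a, by ring⟩

theorem not_mul_sub_modEq_neg {p g a : ℤ} (hp : Prime p) (hg : ¬ p ∣ g) (ha : ¬ p ∣ a) (c : ℤ) :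
    ¬ g * a - c ≡ -c [ZMOD p] := by
  intro h
  have hdvd := Int.modEq_iff_dvd.mp h
  rw [show -c - (g * a - c) = -(g * a) by ring] at hdvd
  exact (hp.dvd_mul.mp (dvd_neg.mp hdvd)).elim hg ha

theorem mul_sub_pos_of_mul_eq {γ A B c : ℤ} (hA : 0 < A) (hB : 0 < B) (hc : 0 < c)
    (h : γ * (A * B) = c * (A + B)) : 0 < γ * A - c := by
  have huB : (γ * A - c) * B = c * A := by linear_combination h
  exact pos_of_mul_pos_left (by rw [huB]; positivity) hB.le

section ED1

variable {P A B c : ℕ}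

theorem ed1_clear_denominators (hP : P ≠ 0) (hA : A ≠ 0) (hB : B ≠ 0) (hc : c ≠ 0)
    (heq : (5 : ℚ) / P = 1 / A + 1 / B + 1 / (c * P)) :
    (5 : ℤ) * (A * B * c) = c * P * (A + B) + A * B := by
  field_simp at heq
  have h : (5 : ℤ) * A * B * c = P * (B + A) * c + A * B := by exact_mod_cast heq
  linear_combination h

theorem ed1_dvd_five_mul_sub_one (hP : P.Prime) (hPA : ¬ P ∣ A) (hPB : ¬ P ∣ B) (hc : 0 < c)
    (hE : (5 : ℤ) * (A * B * c) = c * P * (A + B) + A * B) : P ∣ 5 * c - 1 := by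
  have hPint : Prime (P : ℤ) := Nat.prime_iff_prime_int.mp hP
  have hdvd : (P : ℤ) ∣ A * B * (5 * c - 1) := ⟨c * (A + B), by linear_combination hE⟩
  have hPAB : ¬ (P : ℤ) ∣ A * B := fun h =>
    (hPint.dvd_mul.mp h).elim (hPA <| Int.natCast_dvd_natCast.mp ·)
      (hPB <| Int.natCast_dvd_natCast.mp ·)
  have h := (hPint.dvd_mul.mp hdvd).resolve_left hPAB
  rw [← Int.natCast_dvd_natCast]
  push_cast [show 1 ≤ 5 * c by omega]
  exact h

end ED1

theorem not_dvd_of_ed1 {P A B c γ : ℤ} (hP : 0 < P) (hP5 : P % 5 = 1) (hA : 0 < A) (hB : 0 < B)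
    (hc : 0 < c) (hγP : γ * P = 5 * c - 1) (hkey : γ * (A * B) = c * (A + B)) : ¬ P ∣ γ := by
  rintro ⟨t, rfl⟩
  have ht5 : t % 5 = 4 :=
    emod_five_eq_four_of_mul_eq (P := P * P) (c := c) (by rw [Int.mul_emod, hP5]; rfl)
      (by linear_combination hγP)
  have ht : 0 < t := pos_of_mul_pos_right (a := P * P) (by nlinarith) (by positivity)
  obtain ⟨H, hH⟩ : P * t ∣ A + B :=
    IsCoprime.dvd_of_dvd_mul_left ⟨-P, 5, by linear_combination -hγP⟩ ⟨A * B, hkey.symm⟩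
  have hH0 : 0 < H := pos_of_mul_pos_right (a := P * t) (by rw [← hH]; positivity) (by positivity)
  have hAB : A * B = c * H := by
    apply mul_left_cancel₀ (by positivity : P * t ≠ 0)
    rw [hkey, hH]; ring
  have hA2 : 5 * A ^ 2 = H * (P * t * (5 * A - P) - 1) := by
    linear_combination 5 * A * hH - 5 * hAB + H * hγP
  have hfactor : 0 < P * t * (5 * A - P) - 1 :=
    pos_of_mul_pos_right (by rw [← hA2]; positivity) hH0.le
  have hr : 0 < 5 * A - P := pos_of_mul_pos_right (a := P * t) (by linarith) (by positivity)
  have hM : 7 ≤ 5 * H * t - 2 := by nlinarith [show 4 ≤ t by omega]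
  exact vieta_no_pos_solution (t := t) (by omega) hM hP hr (by linear_combination 5 * t * hA2)

/-- ED1 parametrization (converse direction): every ED1 solution
`5/P = 1/A + 1/B + 1/(c·P)` with `P ∤ A`, `P ∤ B` yields parameters
`γ = (5c−1)/P`, `u = γA − c`, `v = γB − c` with `u·v = c²`, `γ ≡ 4 (mod 5)`,
`u ≡ v ≡ −c (mod γ)` and `u, v ≢ −c (mod P)`. -/
theorem stmt_7 (P A B c : ℕ) (hP : Nat.Prime P) (hP5 : P % 5 = 1)
    (hA : 0 < A) (hB : 0 < B) (hc : 0 < c)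
    (hPA : ¬ P ∣ A) (hPB : ¬ P ∣ B)
    (heq : (5 : ℚ) / (P : ℚ) = 1 / (A : ℚ) + 1 / (B : ℚ) + 1 / ((c : ℚ) * (P : ℚ))) :
    P ∣ 5 * c - 1 ∧
    (let γ : ℕ := (5 * c - 1) / P
     let u : ℤ := (γ : ℤ) * (A : ℤ) - (c : ℤ)
     let v : ℤ := (γ : ℤ) * (B : ℤ) - (c : ℤ)
     0 < u ∧ 0 < v ∧ u * v = (c : ℤ) ^ 2 ∧ γ % 5 = 4 ∧
     u ≡ -(c : ℤ) [ZMOD (γ : ℤ)] ∧ v ≡ -(c : ℤ) [ZMOD (γ : ℤ)] ∧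
     ¬ (u ≡ -(c : ℤ) [ZMOD (P : ℤ)]) ∧ ¬ (v ≡ -(c : ℤ) [ZMOD (P : ℤ)])) := by
  have hE := ed1_clear_denominators hP.ne_zero hA.ne' hB.ne' hc.ne' heq
  have hdvd := ed1_dvd_five_mul_sub_one hP hPA hPB hc hE
  refine ⟨hdvd, ?_⟩
  intro γ u v
  have hγP : (γ : ℤ) * P = 5 * c - 1 := by
    have h : γ * P = 5 * c - 1 := Nat.div_mul_cancel hdvd
    zify [show 1 ≤ 5 * c by omega] at h
    exact h
  have hkey : (γ : ℤ) * (A * B) = c * (A + B) :=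
    mul_right_cancel₀ (b := (P : ℤ)) (by exact_mod_cast hP.ne_zero)
      (by linear_combination hE + A * B * hγP)
  have hAℤ : (0 : ℤ) < A := by exact_mod_cast hA
  have hBℤ : (0 : ℤ) < B := by exact_mod_cast hB
  have hcℤ : (0 : ℤ) < c := by exact_mod_cast hc
  have hPγ : ¬ (P : ℤ) ∣ γ := not_dvd_of_ed1 (by exact_mod_cast hP.pos) (by exact_mod_cast hP5)
    hAℤ hBℤ hcℤ hγP hkey
  have hPint := Nat.prime_iff_prime_int.mp hP
  have hγ5 := emod_five_eq_four_of_mul_eq (by exact_mod_cast hP5) hγP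
  exact ⟨mul_sub_pos_of_mul_eq hAℤ hBℤ hcℤ hkey,
    mul_sub_pos_of_mul_eq hBℤ hAℤ hcℤ (by linear_combination hkey),
    by linear_combination (γ : ℤ) * hkey, by omega, mul_sub_modEq_neg _ _ _,
    mul_sub_modEq_neg _ _ _, not_mul_sub_modEq_neg hPint hPγ (by exact_mod_cast hPA) _,
    not_mul_sub_modEq_neg hPint hPγ (by exact_mod_cast hPB) _⟩
end

section
/- Let P and δ be positive integers, and let r, s be positive integers such that r·s = 5·P·δ + 1, r ≡ 4 (mod 5), and s ≡ 4 (mod 5). Set b = (r + 1)/5 and c = (s + 1)/5, which are positive integers. If δ divides b·c, then with A = b·c/δ, B = b·P, C = c·P one has 5/P = 1/A + 1/B + 1/C (as rational numbers). -/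
/-
Expanding `(r + 1)(s + 1) = 25·b·c` with `r·s = 5·P·δ + 1` and `r + s + 2 = 5·(b + c)` gives
`5·b·c = P·δ + b + c`. Dividing by `b·c·P` turns this into `5/P = δ/(b·c) + 1/(c·P) + 1/(b·P)`,
and `δ/(b·c) = 1/A` when `A = b·c/δ`.
-/

theorem five_mul_mul_eq_of_mul_eq_five_mul_add_one {P δ r s b c : ℕ}
    (hrs : r * s = 5 * P * δ + 1) (hb : r + 1 = 5 * b) (hc : s + 1 = 5 * c) :
    5 * (b * c) = P * δ + b + c := by
  have h : 5 * (5 * (b * c)) + 1 = 5 * (P * δ + b + c) + 1 := by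
    calc 5 * (5 * (b * c)) + 1 = (r + 1) * (s + 1) + 1 := by rw [hb, hc]; ring
      _ = r * s + (r + 1) + (s + 1) := by ring
      _ = 5 * (P * δ + b + c) + 1 := by rw [hrs, hb, hc]; ring
  omega

theorem five_div_eq_one_div_add_one_div_add_one_div {K : Type*} [Field K] {P δ b c : K}
    (hP : P ≠ 0) (hb : b ≠ 0) (hc : c ≠ 0) (h : 5 * (b * c) = P * δ + b + c) :
    5 / P = 1 / (b * c / δ) + 1 / (b * P) + 1 / (c * P) := by
  rw [one_div_div]
  field_simp
  linear_combination h

theorem stmt_9_general (P δ r s : ℕ) (hP : 0 < P)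
    (hrs : r * s = 5 * P * δ + 1) (hr5 : r % 5 = 4) (hs5 : s % 5 = 4) :
    0 < (r + 1) / 5 ∧ 0 < (s + 1) / 5 ∧
    (δ ∣ ((r + 1) / 5) * ((s + 1) / 5) →
      (5 : ℚ) / (P : ℚ) =
        1 / (((((r + 1) / 5) * ((s + 1) / 5)) / δ : ℕ) : ℚ) +
        1 / ((((r + 1) / 5 : ℕ) : ℚ) * (P : ℚ)) +
        1 / ((((s + 1) / 5 : ℕ) : ℚ) * (P : ℚ))) := by
  set b := (r + 1) / 5
  set c := (s + 1) / 5
  have hb : r + 1 = 5 * b := by omega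
  have hc : s + 1 = 5 * c := by omega
  refine ⟨by omega, by omega, fun hdvd => ?_⟩
  have hkey : (5 * (b * c) : ℚ) = P * δ + b + c := by
    exact_mod_cast five_mul_mul_eq_of_mul_eq_five_mul_add_one hrs hb hc
  rw [Nat.cast_div_charZero hdvd, Nat.cast_mul]
  exact five_div_eq_one_div_add_one_div_add_one_div (by positivity) (by norm_cast; omega)
    (by norm_cast; omega) hkey

/-- ED2 construction: from a factorization `r·s = 5·P·δ + 1` with `r ≡ s ≡ 4 (mod 5)`,
the numbers `b = (r+1)/5`, `c = (s+1)/5` are positive integers, and if `δ ∣ b·c`, then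
`A = b·c/δ`, `B = b·P`, `C = c·P` solve `5/P = 1/A + 1/B + 1/C`. -/
theorem stmt_9 (P δ r s : ℕ) (hP : 0 < P) (hδ : 0 < δ) (hr : 0 < r) (hs : 0 < s)
    (hrs : r * s = 5 * P * δ + 1) (hr5 : r % 5 = 4) (hs5 : s % 5 = 4) :
    0 < (r + 1) / 5 ∧ 0 < (s + 1) / 5 ∧
    (δ ∣ ((r + 1) / 5) * ((s + 1) / 5) →
      (5 : ℚ) / (P : ℚ) =
        1 / (((((r + 1) / 5) * ((s + 1) / 5)) / δ : ℕ) : ℚ) +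
        1 / ((((r + 1) / 5 : ℕ) : ℚ) * (P : ℚ)) +
        1 / ((((s + 1) / 5 : ℕ) : ℚ) * (P : ℚ))) :=
  stmt_9_general P δ r s hP hrs hr5 hs5
end

section
/- Let P be a prime with P ≠ 5, and let A ≤ B ≤ C be positive integers with 5/P = 1/A + 1/B + 1/C (as rational numbers). Then P does not divide A, and the number of elements of the multiset {A, B, C} divisible by P is exactly 1 or exactly 2; that is, either exactly one of B, C is divisible by P, or both B and C are divisible by P. -/
/-! The smallest denominator satisfies `5/P ≤ 3/A`, so `A < P` and `P ∤ A`. Clearing denominators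
gives `5ABC = P(BC + AC + AB)`; since `P ∤ 5`, the prime `P` divides `ABC`, hence `B` or `C`. -/

section EgyptianFraction

variable {n P A B C : ℕ}

theorem mul_le_three_mul_of_div_eq_sum_inv (hP : 0 < P) (hA : 0 < A) (hAB : A ≤ B) (hBC : B ≤ C)
    (heq : (n : ℚ) / P = 1 / A + 1 / B + 1 / C) : n * A ≤ 3 * P := by
  have hAq : (0 : ℚ) < A := by exact_mod_cast hA
  have hB : (1 : ℚ) / B ≤ 1 / A := one_div_le_one_div_of_le hAq (by exact_mod_cast hAB)
  have hC : (1 : ℚ) / C ≤ 1 / A := one_div_le_one_div_of_le hAq (by exact_mod_cast hAB.trans hBC)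
  have hle : (n : ℚ) / P ≤ 3 / A := by
    rw [heq]
    linarith [show (3 : ℚ) / A = 1 / A + 1 / A + 1 / A by ring]
  exact_mod_cast (div_le_div_iff₀ (by exact_mod_cast hP) hAq).mp hle

theorem mul_prod_eq_of_div_eq_sum_inv (hP : P ≠ 0) (hA : A ≠ 0) (hB : B ≠ 0) (hC : C ≠ 0)
    (heq : (n : ℚ) / P = 1 / A + 1 / B + 1 / C) :
    n * (A * B * C) = P * (B * C + A * C + A * B) := by
  have hPq : (P : ℚ) ≠ 0 := by exact_mod_cast hP
  have hAq : (A : ℚ) ≠ 0 := by exact_mod_cast hA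
  have hBq : (B : ℚ) ≠ 0 := by exact_mod_cast hB
  have hCq : (C : ℚ) ≠ 0 := by exact_mod_cast hC
  field_simp at heq
  exact_mod_cast (by linear_combination heq : (n : ℚ) * (A * B * C) = P * (B * C + A * C + A * B))

end EgyptianFraction

theorem stmt_14_general (P : ℕ) (hP : Nat.Prime P) (hP5 : P ≠ 5)
    (A B C : ℕ) (hA : 0 < A)
    (hAB : A ≤ B) (hBC : B ≤ C)
    (heq : (5 : ℚ) / (P : ℚ) = 1 / (A : ℚ) + 1 / (B : ℚ) + 1 / (C : ℚ)) :
    ¬ P ∣ A ∧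
      ((P ∣ B ∧ ¬ P ∣ C) ∨ (¬ P ∣ B ∧ P ∣ C) ∨ (P ∣ B ∧ P ∣ C)) := by
  have hheq : ((5 : ℕ) : ℚ) / P = 1 / A + 1 / B + 1 / C := by exact_mod_cast heq
  have hAP : A < P := by
    have := mul_le_three_mul_of_div_eq_sum_inv hP.pos hA hAB hBC hheq
    omega
  have hPA : ¬ P ∣ A := fun h => (Nat.le_of_dvd hA h).not_gt hAP
  have hP_not_dvd_five : ¬ P ∣ 5 := fun h =>
    hP5 ((Nat.prime_dvd_prime_iff_eq hP Nat.prime_five).mp h)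
  have hclear := mul_prod_eq_of_div_eq_sum_inv hP.ne_zero hA.ne' (by omega) (by omega) hheq
  have hPABC : P ∣ A * B * C :=
    (hP.dvd_mul.mp (Dvd.intro _ hclear.symm)).resolve_left hP_not_dvd_five
  have hPB_or_hPC : P ∣ B ∨ P ∣ C := by
    rcases hP.dvd_mul.mp hPABC with hPAB | hPC
    · exact .inl ((hP.dvd_mul.mp hPAB).resolve_left hPA)
    · exact .inr hPC
  refine ⟨hPA, ?_⟩
  by_cases hPB : P ∣ B <;> by_cases hPC : P ∣ C <;> tauto

/-- Classification of solutions: for a prime `P ≠ 5` and positive integers `A ≤ B ≤ C`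
with `5/P = 1/A + 1/B + 1/C`, the minimal denominator `A` is not divisible by `P`, and
either exactly one of `B, C` is divisible by `P`, or both `B` and `C` are divisible by `P`
(so the number of denominators divisible by `P` is exactly 1 or exactly 2). -/
theorem stmt_14 (P : ℕ) (hP : Nat.Prime P) (hP5 : P ≠ 5)
    (A B C : ℕ) (hA : 0 < A) (hB : 0 < B) (hC : 0 < C)
    (hAB : A ≤ B) (hBC : B ≤ C)
    (heq : (5 : ℚ) / (P : ℚ) = 1 / (A : ℚ) + 1 / (B : ℚ) + 1 / (C : ℚ)) :
    ¬ P ∣ A ∧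
      ((P ∣ B ∧ ¬ P ∣ C) ∨ (¬ P ∣ B ∧ P ∣ C) ∨ (P ∣ B ∧ P ∣ C)) :=
  stmt_14_general P hP hP5 A B C hA hAB hBC heq
end

section
/- Let r be a positive integer with r ≡ 4 (mod 5). Then the set of primes P with P ≡ 1 (mod 5) and r | (5·P + 1) is infinite; and for every such prime P, setting b = (r + 1)/5, s = (5·P + 1)/r, c = (s + 1)/5, and A = b·c, the numbers b, c, A are positive integers and 5/P = 1/A + 1/(b·P) + 1/(c·P) (as rational numbers). -/
/-!
By the Chinese remainder theorem, `P ≡ 1 (mod 5)` and `5P ≡ -1 (mod r)` single out one unit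
residue class modulo `5r`, so Dirichlet's theorem gives infinitely many such primes. For each of
them, `(5b - 1)(5c - 1) = 5P + 1` is equivalent to `5bc = P + b + c`, which becomes the
Egyptian-fraction identity after dividing by `bcP`.
-/

theorem Nat.infinite_setOf_prime_and_natCast_eq_and_natCast_eq {m n : ℕ} [NeZero m] [NeZero n]
    (hmn : m.Coprime n) {u : ZMod m} {v : ZMod n} (hu : IsUnit u) (hv : IsUnit v) :
    {p : ℕ | p.Prime ∧ (p : ZMod m) = u ∧ (p : ZMod n) = v}.Infinite := by
  let e := ZMod.chineseRemainder hmn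
  have hunit : IsUnit (e.symm (u, v)) := (Prod.isUnit_iff.2 ⟨hu, hv⟩).map e.symm
  refine (Nat.infinite_setOfPred_prime_and_eq_mod hunit).mono ?_
  rintro p ⟨hp, hpuv⟩
  have he : e p = (u, v) := by rw [hpuv, e.apply_symm_apply]
  rw [map_natCast, Prod.ext_iff] at he
  exact ⟨hp, he⟩

theorem Nat.infinite_setOf_prime_and_mod_eq_one_and_dvd_mul_add_one {a n : ℕ} (ha : 1 < a)
    (hn : n ≠ 0) (han : a.Coprime n) :
    {p : ℕ | p.Prime ∧ p % a = 1 ∧ n ∣ a * p + 1}.Infinite := by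
  have : NeZero a := ⟨by omega⟩
  have : NeZero n := ⟨hn⟩
  have hinv : (a : ZMod n) * (a : ZMod n)⁻¹ = 1 := ZMod.coe_mul_inv_eq_one a han
  refine (infinite_setOf_prime_and_natCast_eq_and_natCast_eq han isUnit_one
    (IsUnit.of_mul_eq_one_right _ hinv).neg).mono ?_
  rintro p ⟨hp, hp1, hpinv⟩
  refine ⟨hp, ?_, ?_⟩
  · rw [← Nat.cast_one, ZMod.natCast_eq_natCast_iff'] at hp1
    rwa [Nat.one_mod_eq_one.2 ha.ne'] at hp1
  · rw [← ZMod.natCast_eq_zero_iff]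
    push_cast
    rw [hpinv]
    linear_combination -hinv

theorem mul_mul_eq_add_add_of_mul_eq_mul_add_one {n b c r s P : ℕ} (hn : 0 < n)
    (hb : n * b = r + 1) (hc : n * c = s + 1) (hrs : r * s = n * P + 1) :
    n * (b * c) = P + b + c := by
  refine Nat.eq_of_mul_eq_mul_left hn ?_
  zify at *
  linear_combination (n * c - 1 : ℤ) * hb + (r : ℤ) * hc + hrs

theorem div_eq_one_div_mul_add_one_div_mul_add_one_div_mul {K : Type*} [Field K] {n b c P : K}
    (hb : b ≠ 0) (hc : c ≠ 0) (hP : P ≠ 0) (h : n * (b * c) = P + b + c) :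
    n / P = 1 / (b * c) + 1 / (b * P) + 1 / (c * P) := by
  field_simp
  linear_combination h

theorem stmt_18_general (r : ℕ) (hr5 : r % 5 = 4) :
    {P : ℕ | Nat.Prime P ∧ P % 5 = 1 ∧ r ∣ 5 * P + 1}.Infinite ∧
    ∀ P : ℕ, Nat.Prime P → P % 5 = 1 → r ∣ 5 * P + 1 →
      (let b := (r + 1) / 5
       let s := (5 * P + 1) / r
       let c := (s + 1) / 5
       let A := b * c
       0 < b ∧ 0 < c ∧ 0 < A ∧
         (5 : ℚ) / (P : ℚ) =
           1 / (A : ℚ) + 1 / ((b : ℚ) * (P : ℚ)) + 1 / ((c : ℚ) * (P : ℚ))) := by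
  refine ⟨Nat.infinite_setOf_prime_and_mod_eq_one_and_dvd_mul_add_one (by norm_num) (by omega)
    ((Nat.Prime.coprime_iff_not_dvd Nat.prime_five).2 (by omega)), ?_⟩
  rintro P hP - ⟨s, hs⟩
  have hsr : (5 * P + 1) / r = s := by rw [hs, Nat.mul_div_cancel_left _ (by omega)]
  have hs5 : s % 5 = 4 := by
    have := Nat.mul_mod r s 5
    rw [hr5, ← hs] at this
    omega
  have hb : 5 * ((r + 1) / 5) = r + 1 := Nat.mul_div_cancel' (by omega)
  have hc : 5 * ((s + 1) / 5) = s + 1 := Nat.mul_div_cancel' (by omega)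
  have hbc := mul_mul_eq_add_add_of_mul_eq_mul_add_one (by norm_num) hb hc hs.symm
  dsimp only
  rw [hsr]
  refine ⟨by omega, by omega, Nat.mul_pos (by omega) (by omega), ?_⟩
  push_cast
  exact div_eq_one_div_mul_add_one_div_mul_add_one_div_mul (by norm_cast; omega)
    (by norm_cast; omega) (mod_cast hP.ne_zero) (mod_cast hbc)

/-- Case `δ = 1`: for every `r ≡ 4 (mod 5)` there are infinitely many primes
`P ≡ 1 (mod 5)` with `r ∣ 5P + 1`, and each such prime yields the ED2 solution
`b = (r+1)/5`, `s = (5P+1)/r`, `c = (s+1)/5`, `A = b·c` of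
`5/P = 1/A + 1/(b·P) + 1/(c·P)`. -/
theorem stmt_18 (r : ℕ) (hr : 0 < r) (hr5 : r % 5 = 4) :
    {P : ℕ | Nat.Prime P ∧ P % 5 = 1 ∧ r ∣ 5 * P + 1}.Infinite ∧
    ∀ P : ℕ, Nat.Prime P → P % 5 = 1 → r ∣ 5 * P + 1 →
      (let b := (r + 1) / 5
       let s := (5 * P + 1) / r
       let c := (s + 1) / 5
       let A := b * c
       0 < b ∧ 0 < c ∧ 0 < A ∧
         (5 : ℚ) / (P : ℚ) =
           1 / (A : ℚ) + 1 / ((b : ℚ) * (P : ℚ)) + 1 / ((c : ℚ) * (P : ℚ))) :=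
  stmt_18_general r hr5
end
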